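/- Let V be a finite set of visible units and let S₁,…,S_M be a family of 4-element subsets of V (the vertex stars of the toric code). Define W(x,h) = iπ·x·h − (ln 2)/4 for binary x, h. Then for every v : V → {0,1}, ∑_{h : Fin M → {0,1}} exp( ∑_{j=1}^{M} ∑_{i ∈ S_j} W(v_i, h_j) ) = ∏_{j=1}^{M} χ(S_j, v), where χ(S_j, v) = 1 if ∑_{i∈S_j} v_i is even and χ(S_j, v) = 0 if ∑_{i∈S_j} v_i is odd. In particular, the toric code wave function, which is the product over all vertices of the even-parity constraint on the four adjacent edge qubits, is exactly represented by an RBM with one hidden neuron per vertex. -/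
import Mathlib


open Complex Real Finset

/-- The toric-code weight function `W(x,h) = iπ·x·h − (ln 2)/4` for binary `x, h`. -/
noncomputable def Wtc (x h : Fin 2) : ℂ :=
  Complex.I * Real.pi * ((x : ℕ) : ℂ) * ((h : ℕ) : ℂ) - Real.log 2 / 4

lemma wtc_sum {V : Type*} [DecidableEq V] (s : Finset V) (hs : s.card = 4)
    (v : V → Fin 2) (x : Fin 2) :
    ∑ i ∈ s, Wtc (v i) x
      = Complex.I * Real.pi * ((∑ i ∈ s, ((v i : ℕ))) : ℂ) * ((x : ℕ) : ℂ)
        - Real.log 2 := by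
  unfold Wtc
  rw [Finset.sum_sub_distrib, Finset.sum_const, hs]
  rw [← Finset.sum_mul, ← Finset.mul_sum]
  ring

lemma sum_prod_fn {M : ℕ} (g : Fin M → Fin 2 → ℂ) :
    ∑ h : Fin M → Fin 2, ∏ j : Fin M, g j (h j) = ∏ j : Fin M, ∑ x : Fin 2, g j x :=
  (Fintype.prod_sum g).symm

lemma key_step (s : ℕ) :
    ∑ x : Fin 2,
      Complex.exp (Complex.I * Real.pi * (s : ℂ) * ((x : ℕ) : ℂ) - Real.log 2)
      = if Even s then (1 : ℂ) else 0 := by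
  have h2 : Complex.exp (-(Real.log 2 : ℂ)) = 1 / 2 := by
    rw [show (-(Real.log 2 : ℂ)) = ((-Real.log 2 : ℝ) : ℂ) by push_cast; ring,
      ← Complex.ofReal_exp]
    norm_num [Real.exp_neg, Real.exp_log]
  have hpi : Complex.exp (Complex.I * Real.pi * (s : ℂ)) = (-1) ^ s := by
    rw [show Complex.I * Real.pi * (s : ℂ) = s * (Real.pi * Complex.I) by ring,
      Complex.exp_nat_mul, Complex.exp_pi_mul_I]
  rw [Fin.sum_univ_two]
  simp only [Fin.val_zero, Fin.val_one, Nat.cast_zero, Nat.cast_one, mul_zero, mul_one,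
    zero_sub]
  rw [h2, sub_eq_add_neg, Complex.exp_add, hpi, h2]
  rcases Nat.even_or_odd s with he | ho
  · rw [he.neg_one_pow, if_pos he]; ring
  · rw [ho.neg_one_pow, if_neg (Nat.not_even_iff_odd.mpr ho)]; ring

set_option maxHeartbeats 1000000 in
/-- The toric code wave function — the product over all vertex stars `S j` (4-element sets of
edge qubits) of the even-parity indicator — is exactly represented by an RBM with one hidden
neuron per vertex, connected with weight `W(x,h) = iπ·x·h − (ln 2)/4` to the four qubits of
the star. -/
theorem toric_code_RBM {V : Type*} [Fintype V] [DecidableEq V] (M : ℕ)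
    (S : Fin M → Finset V) (hS : ∀ j, (S j).card = 4) (v : V → Fin 2) :
    ∑ h : Fin M → Fin 2, Complex.exp (∑ j : Fin M, ∑ i ∈ S j, Wtc (v i) (h j))
      = ∏ j : Fin M, (if Even (∑ i ∈ S j, ((v i : ℕ))) then (1 : ℂ) else 0) := by
  have step1 : ∀ h : Fin M → Fin 2,
      Complex.exp (∑ j : Fin M, ∑ i ∈ S j, Wtc (v i) (h j))
        = ∏ j : Fin M, Complex.exp (∑ i ∈ S j, Wtc (v i) (h j)) := fun h =>
    Complex.exp_sum _ _
  simp_rw [step1]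
  rw [sum_prod_fn (fun j x => Complex.exp (∑ i ∈ S j, Wtc (v i) x))]
  refine Finset.prod_congr rfl fun j _ => ?_
  simp_rw [wtc_sum (S j) (hS j) v]
  simp_rw [← Nat.cast_sum]
  exact key_step (∑ i ∈ S j, ((v i : ℕ)))
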